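/- arXiv:2605.15094 — 6 statements merged into one kernel-verified Lean document; each statement's English description precedes it below -/
import Mathlib

section
/- Let R ⊆ ℝ² be a convex set. If there exist distinct integers s₁,…,s_m (m ≥ 1) forming a cycle of R (i.e., (s_i, s_{i+1}) ∈ R for i < m and (s_m, s₁) ∈ R), then there exist integers a, b with (a,b) ∈ R and (b,a) ∈ R (i.e., R has a cycle of length at most two). -/
/-!
The edges `(s i, s (i + 1))` of the cycle average to the diagonal point `(μ, μ)`, where `μ` is
the mean of `s`; if `μ` is an integer we are done. Otherwise let `b = ⌊μ⌋`. If `(b + 1, b) ∉ R`,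
a linear functional separates it strictly from the edges, so the shifted integer cycle
`g = s - (b + 1)` has all its edges in an open half-plane `α x + β (y + 1) > 0` missing `(0, -1)`.
Depending on the signs of `α` and `β`, either one of `{g ≥ 0}`, `{g < 0}` is closed under the
successor, or every negative (resp. nonnegative) value is compensated by that of its successor or
predecessor. Either way the mean of `g` is `≥ 0` or `≤ -1`, contradicting `b < μ < b + 1`.
The point `(b, b + 1)` is obtained in the same way from the reversed cycle.
-/

open Finset

theorem Convex.exists_strongDual_lt_of_notMem {E : Type*} [TopologicalSpace E] [AddCommGroup E]
    [Module ℝ E] [IsTopologicalAddGroup E] [ContinuousSMul ℝ E] [LocallyConvexSpace ℝ E]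
    [T2Space E] {R : Set E} (hR : Convex ℝ R) {ι : Type*} [Finite ι] {p : ι → E}
    (hp : ∀ i, p i ∈ R) {q : E} (hq : q ∉ R) : ∃ f : StrongDual ℝ E, ∀ i, f q < f (p i) := by
  have hH : convexHull ℝ (Set.range p) ⊆ R := convexHull_min (Set.range_subset_iff.2 hp) hR
  obtain ⟨f, u, hqu, hu⟩ := geometric_hahn_banach_point_closed (convex_convexHull ℝ _)
    ((Set.finite_range p).isClosed_convexHull ℝ) (fun h => hq (hH h))
  exact ⟨f, fun i => hqu.trans (hu _ (subset_convexHull ℝ _ (Set.mem_range_self i)))⟩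

open Fin.NatCast Fin.CommRing in
theorem Fin.forall_of_forall_imp_add_one {m : ℕ} [NeZero m] {Q : Fin m → Prop}
    (h : ∀ i, Q i → Q (i + 1)) {i : Fin m} (hi : Q i) (j : Fin m) : Q j := by
  have key : ∀ n : ℕ, Q (i + n) := by
    intro n
    induction n with
    | zero => simpa using hi
    | succ n ih => simpa [add_assoc] using h _ ih
  simpa using key (j - i).val

theorem Fintype.sum_nonneg_of_neg_le_perm {ι G : Type*} [Fintype ι] [AddCommGroup G]
    [LinearOrder G] [IsOrderedAddMonoid G] (g : ι → G) (e : Equiv.Perm ι)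
    (h : ∀ i, g i < 0 → -g i ≤ g (e i)) : 0 ≤ ∑ i, g i := by
  classical
  set N := univ.filter (g · < 0)
  have hdisj : Disjoint N (N.map e.toEmbedding) := by
    refine disjoint_left.2 fun i hi hi' => ?_
    obtain ⟨j, hj, rfl⟩ := mem_map.1 hi'
    simp only [N, mem_filter, mem_univ, true_and] at hi hj
    exact lt_asymm (neg_pos.2 hj) ((h j hj).trans_lt hi)
  calc 0 ≤ ∑ i ∈ N, (g i + g (e i)) + ∑ i ∈ (N ∪ N.map e.toEmbedding)ᶜ, g i := by
        refine add_nonneg (Finset.sum_nonneg fun i hi => ?_) (Finset.sum_nonneg fun i hi => ?_)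
        · exact neg_le_iff_add_nonneg'.1 (h i (mem_filter.1 hi).2)
        · simp only [mem_compl, mem_union, not_or] at hi
          simpa [N] using hi.1
    _ = ∑ i, g i := by
        have hmap := sum_map N e.toEmbedding g
        simp only [Equiv.coe_toEmbedding] at hmap
        rw [sum_add_distrib, ← hmap, ← sum_union hdisj, sum_add_sum_compl]

theorem Fintype.sum_le_neg_card_of_perm {ι : Type*} [Fintype ι] (g : ι → ℤ) (e : Equiv.Perm ι)
    (h : ∀ i, 0 ≤ g i → g i + g (e i) ≤ -2) : ∑ i, g i ≤ -Fintype.card ι := by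
  have := sum_nonneg_of_neg_le_perm (fun i => -1 - g i) e fun i hi => by
    have := h i (by omega); omega
  simp only [sum_sub_distrib, sum_const, card_univ, nsmul_eq_mul, mul_neg, mul_one] at this
  linarith

section IntCycle

variable {m : ℕ} [NeZero m]

theorem sum_nonneg_or_le_neg_of_sign_closed (g : Fin m → ℤ)
    (h : (∀ i, 0 ≤ g i → 0 ≤ g (i + 1)) ∨ ∀ i, g i < 0 → g (i + 1) < 0) :
    0 ≤ ∑ i, g i ∨ ∑ i, g i ≤ -m := by
  have hsign : (∀ i, 0 ≤ g i) ∨ ∀ i, g i < 0 := by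
    rcases h with h | h
    · by_cases hP : ∃ i, 0 ≤ g i
      · obtain ⟨i, hi⟩ := hP
        exact .inl (Fin.forall_of_forall_imp_add_one h hi)
      · push Not at hP
        exact .inr hP
    · by_cases hN : ∃ i, g i < 0
      · obtain ⟨i, hi⟩ := hN
        exact .inr (Fin.forall_of_forall_imp_add_one h hi)
      · push Not at hN
        exact .inl hN
  rcases hsign with h | h
  · exact .inl (sum_nonneg fun i _ => h i)
  · refine .inr ?_
    calc ∑ i, g i ≤ ∑ _i : Fin m, (-1 : ℤ) := sum_le_sum fun i _ => by linarith [h i]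
      _ = -m := by simp

theorem pos_mul_add_succ {g : Fin m → ℤ} {α β : ℝ}
    (h : ∀ i, 0 < α * g i + β * (g (i + 1) + 1)) (i : Fin m) (hi : 0 ≤ (β - α) * g i) :
    0 < β * ((g i + g (i + 1) + 1 : ℤ) : ℝ) := by
  push_cast
  linarith [h i]

theorem pos_mul_pred_add {g : Fin m → ℤ} {α β : ℝ}
    (h : ∀ i, 0 < α * g i + β * (g (i + 1) + 1)) (i : Fin m) (hi : 0 ≤ (α - β) * (g i + 1)) :
    0 < α * ((g (i - 1) + g i + 1 : ℤ) : ℝ) := by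
  have := h (i - 1)
  rw [sub_add_cancel] at this
  push_cast
  linarith

theorem sum_nonneg_of_forall_pos {g : Fin m → ℤ} {α β : ℝ} (hα : 0 ≤ α) (hβ : 0 ≤ β)
    (h : ∀ i, 0 < α * g i + β * (g (i + 1) + 1)) : 0 ≤ ∑ i, g i := by
  rcases le_total β α with hβα | hαβ
  · refine Fintype.sum_nonneg_of_neg_le_perm g (Equiv.addRight 1) fun i hi => ?_
    have hgi : (g i : ℝ) ≤ 0 := by exact_mod_cast hi.le
    have := Int.cast_pos.1 <| pos_of_mul_pos_right
      (pos_mul_add_succ h i (mul_nonneg_of_nonpos_of_nonpos (by linarith) hgi)) hβ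
    simp only [Equiv.coe_addRight]
    omega
  · refine Fintype.sum_nonneg_of_neg_le_perm g (Equiv.subRight 1) fun i hi => ?_
    have hgi : (g i : ℝ) + 1 ≤ 0 := by exact_mod_cast (show g i + 1 ≤ 0 by omega)
    have := Int.cast_pos.1 <| pos_of_mul_pos_right
      (pos_mul_pred_add h i (mul_nonneg_of_nonpos_of_nonpos (by linarith) hgi)) hα
    simp only [Equiv.subRight_apply]
    omega

theorem sum_le_neg_of_forall_pos {g : Fin m → ℤ} {α β : ℝ} (hα : α ≤ 0) (hβ : β ≤ 0)
    (h : ∀ i, 0 < α * g i + β * (g (i + 1) + 1)) : ∑ i, g i ≤ -m := by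
  rcases le_total α β with hαβ | hβα
  · simpa using Fintype.sum_le_neg_card_of_perm g (Equiv.addRight 1) fun i hi => by
      have hgi : (0 : ℝ) ≤ g i := by exact_mod_cast hi
      have := Int.cast_lt_zero.1 <| neg_of_mul_pos_right
        (pos_mul_add_succ h i (mul_nonneg (by linarith) hgi)) hβ
      simp only [Equiv.coe_addRight]
      omega
  · simpa using Fintype.sum_le_neg_card_of_perm g (Equiv.subRight 1) fun i hi => by
      have hgi : (0 : ℝ) ≤ g i + 1 := by exact_mod_cast (show 0 ≤ g i + 1 by omega)
      have := Int.cast_lt_zero.1 <| neg_of_mul_pos_right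
        (pos_mul_pred_add h i (mul_nonneg (by linarith) hgi)) hα
      simp only [Equiv.subRight_apply]
      omega

theorem sum_nonneg_or_le_neg_of_forall_pos (g : Fin m → ℤ) {α β : ℝ}
    (h : ∀ i, 0 < α * g i + β * (g (i + 1) + 1)) : 0 ≤ ∑ i, g i ∨ ∑ i, g i ≤ -m := by
  rcases le_total α 0 with hα | hα <;> rcases le_total β 0 with hβ | hβ
  · exact .inr (sum_le_neg_of_forall_pos hα hβ h)
  · refine sum_nonneg_or_le_neg_of_sign_closed g (.inl fun i hi => ?_)
    have hαg : α * g i ≤ 0 := mul_nonpos_of_nonpos_of_nonneg hα (by exact_mod_cast hi)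
    have := pos_of_mul_pos_right
      (by push_cast; linarith [h i] : 0 < β * ((g (i + 1) + 1 : ℤ) : ℝ)) hβ
    exact Int.lt_add_one_iff.1 (Int.cast_pos.1 this)
  · refine sum_nonneg_or_le_neg_of_sign_closed g (.inr fun i hi => ?_)
    have hαg : α * g i ≤ 0 := mul_nonpos_of_nonneg_of_nonpos hα (by exact_mod_cast hi.le)
    have := neg_of_mul_pos_right
      (by push_cast; linarith [h i] : 0 < β * ((g (i + 1) + 1 : ℤ) : ℝ)) hβ
    linarith [Int.cast_lt_zero.1 this]
  · exact .inl (sum_nonneg_of_forall_pos hα hβ h)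

end IntCycle

section ConvexCycle

variable {m : ℕ} [NeZero m] {R : Set (ℝ × ℝ)}

theorem Convex.centroid_mem_of_cycle (hR : Convex ℝ R) (s : Fin m → ℤ)
    (hc : ∀ i, ((s i : ℝ), (s (i + 1) : ℝ)) ∈ R) :
    (((∑ i, s i : ℤ) : ℝ) / m, ((∑ i, s i : ℤ) : ℝ) / m) ∈ R := by
  have hshift : ∑ i, (s (i + 1) : ℝ) = ∑ i, (s i : ℝ) :=
    Equiv.sum_comp (Equiv.addRight 1) fun i => (s i : ℝ)
  have hmem := hR.sum_mem (t := univ) (w := fun _ => (m : ℝ)⁻¹) (fun _ _ => by positivity)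
    (by simp) (fun i _ => hc i)
  convert hmem using 1
  ext <;> simp [Prod.fst_sum, Prod.snd_sum, ← mul_sum, hshift, div_eq_inv_mul]

theorem Convex.mk_add_one_self_mem_of_cycle (hR : Convex ℝ R) (s : Fin m → ℤ)
    (hc : ∀ i, ((s i : ℝ), (s (i + 1) : ℝ)) ∈ R) {b : ℤ} (hlo : m * b < ∑ i, s i)
    (hhi : ∑ i, s i < m * (b + 1)) : ((b : ℝ) + 1, (b : ℝ)) ∈ R := by
  by_contra hq
  obtain ⟨f, hf⟩ := hR.exists_strongDual_lt_of_notMem hc hq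
  have hf₂ : ∀ x y : ℝ, f (x, y) = x * f (1, 0) + y * f (0, 1) := fun x y => by
    rw [show ((x, y) : ℝ × ℝ) = x • (1, 0) + y • (0, 1) by simp, map_add, map_smul, map_smul,
      smul_eq_mul, smul_eq_mul]
  have hg : ∀ i, 0 < f (1, 0) * ((s i - (b + 1) : ℤ) : ℝ) +
      f (0, 1) * ((s (i + 1) - (b + 1) : ℤ) + 1) := fun i => by
    have := hf i
    rw [hf₂ (b + 1), hf₂ (s i)] at this
    push_cast
    linarith
  have hsum : ∑ i, (s i - (b + 1)) = ∑ i, s i - m * (b + 1) := by simp [sum_sub_distrib]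
  rcases sum_nonneg_or_le_neg_of_forall_pos _ hg with h | h <;> rw [hsum] at h <;> linarith

theorem Convex.mk_self_add_one_mem_of_cycle (hR : Convex ℝ R) (s : Fin m → ℤ)
    (hc : ∀ i, ((s i : ℝ), (s (i + 1) : ℝ)) ∈ R) {b : ℤ} (hlo : m * b < ∑ i, s i)
    (hhi : ∑ i, s i < m * (b + 1)) : ((b : ℝ), (b : ℝ) + 1) ∈ R := by
  have hswap : Convex ℝ (Prod.swap ⁻¹' R) :=
    hR.linear_preimage (LinearEquiv.prodComm ℝ ℝ ℝ).toLinearMap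
  have hrev : ∀ i, ((s (-i) : ℝ), (s (-(i + 1)) : ℝ)) ∈ Prod.swap ⁻¹' R := fun i => by
    show ((s (-(i + 1)) : ℝ), (s (-i) : ℝ)) ∈ R
    simpa only [neg_add', sub_add_cancel] using hc (-(i + 1))
  have hsum : ∑ i, s (-i) = ∑ i, s i := Equiv.sum_comp (Equiv.neg _) s
  exact hswap.mk_add_one_self_mem_of_cycle (fun i => s (-i)) hrev (hsum ▸ hlo) (hsum ▸ hhi)

end ConvexCycle

theorem stmt_2_general (R : Set (ℝ × ℝ)) (hR : Convex ℝ R) (m : ℕ) [NeZero m]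
    (s : Fin m → ℤ)
    (hc : ∀ i : Fin m, (((s i : ℝ)), ((s (i + 1) : ℝ))) ∈ R) :
    ∃ a b : ℤ, ((a : ℝ), (b : ℝ)) ∈ R ∧ ((b : ℝ), (a : ℝ)) ∈ R := by
  by_cases hdvd : (m : ℤ) ∣ ∑ i, s i
  · obtain ⟨c, hT⟩ := hdvd
    have hmem := hR.centroid_mem_of_cycle s hc
    rw [hT, Int.cast_mul, Int.cast_natCast, mul_div_cancel_left₀ _ (NeZero.ne _)] at hmem
    exact ⟨c, c, hmem, hmem⟩
  set b := (∑ i, s i) / m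
  have hm : (0 : ℤ) < m := Int.natCast_pos.2 (NeZero.pos m)
  have hlo : m * b < ∑ i, s i := by
    have := Int.mul_ediv_add_emod (∑ i, s i) m
    have := (Int.emod_pos_of_not_dvd hdvd).resolve_left hm.ne'
    linarith
  have hhi : ∑ i, s i < m * (b + 1) := by
    rw [mul_comm]
    exact Int.lt_ediv_add_one_mul_self _ hm
  exact ⟨b + 1, b, by exact_mod_cast hR.mk_add_one_self_mem_of_cycle s hc hlo hhi,
    by exact_mod_cast hR.mk_self_add_one_mem_of_cycle s hc hlo hhi⟩

theorem stmt_2 (R : Set (ℝ × ℝ)) (hR : Convex ℝ R) (m : ℕ) [NeZero m]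
    (s : Fin m → ℤ) (hs : Function.Injective s)
    (hc : ∀ i : Fin m, (((s i : ℝ)), ((s (i + 1) : ℝ))) ∈ R) :
    ∃ a b : ℤ, ((a : ℝ), (b : ℝ)) ∈ R ∧ ((b : ℝ), (a : ℝ)) ∈ R :=
  stmt_2_general R hR m s hc
end

section
/- Suppose that every polyhedral relation R ⊆ ℝ^{2n} which admits a cycle admits a cycle of length at most M(n). Then every convex relation T ⊆ ℝ^{2n} which admits a cycle also admits a cycle of length at most M(n). -/
/-! A cycle only visits integer points. Given a cycle in `T`, take a lattice box containing its
pairs: the box holds finitely many integer points, and each of them outside the convex hull `K`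
of the pairs is cut off from `K` by a hyperplane (Hahn–Banach). The box together with these
finitely many cuts is a polyhedral relation `R` containing the cycle whose integer points all
lie in `K ⊆ T`, so the short cycle that `R` admits by hypothesis is a cycle of `T`. -/

/-- A cycle of length `m` for a relation `S ⊆ ℝ^n × ℝ^n`: a sequence of integer
vectors with consecutive pairs (cyclically) in `S`. -/
def HasCycleOfLength (n : ℕ) (S : Set ((Fin n → ℝ) × (Fin n → ℝ))) (m : ℕ) [NeZero m] : Prop :=
  ∃ s : Fin m → (Fin n → ℤ),
    ∀ i : Fin m, ((fun j => ((s i j : ℝ))), (fun j => ((s (i + 1) j : ℝ)))) ∈ S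

/-- A polyhedral relation: a finite intersection of closed half-spaces. -/
def IsPolyhedralRelation (n : ℕ) (P : Set ((Fin n → ℝ) × (Fin n → ℝ))) : Prop :=
  ∃ (k : ℕ) (f : Fin k → ((Fin n → ℝ) × (Fin n → ℝ)) →ₗ[ℝ] ℝ) (b : Fin k → ℝ),
    P = {x | ∀ i, f i x ≤ b i}

open Set

section

variable {n : ℕ}

lemma isPolyhedralRelation_of_finite {ι : Type*} [Finite ι]
    (f : ι → ((Fin n → ℝ) × (Fin n → ℝ)) →ₗ[ℝ] ℝ) (b : ι → ℝ) :
    IsPolyhedralRelation n {x | ∀ i, f i x ≤ b i} := by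
  obtain ⟨k, ⟨e⟩⟩ := Finite.exists_equiv_fin ι
  refine ⟨k, f ∘ e.symm, b ∘ e.symm, ?_⟩
  ext x
  exact e.symm.forall_congr_right.symm

lemma IsPolyhedralRelation.inter {P Q : Set ((Fin n → ℝ) × (Fin n → ℝ))}
    (hP : IsPolyhedralRelation n P) (hQ : IsPolyhedralRelation n Q) :
    IsPolyhedralRelation n (P ∩ Q) := by
  obtain ⟨k, f, b, rfl⟩ := hP
  obtain ⟨l, g, c, rfl⟩ := hQ
  convert isPolyhedralRelation_of_finite (Sum.elim f g) (Sum.elim b c) using 1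
  ext x
  simp [Sum.forall]

def coordFn (c : Fin n ⊕ Fin n) : ((Fin n → ℝ) × (Fin n → ℝ)) →ₗ[ℝ] ℝ :=
  Sum.elim (fun j => (LinearMap.proj j).comp (LinearMap.fst ℝ _ _))
    (fun j => (LinearMap.proj j).comp (LinearMap.snd ℝ _ _)) c

lemma le_iff_forall_coordFn_le {x y : (Fin n → ℝ) × (Fin n → ℝ)} :
    x ≤ y ↔ ∀ c, coordFn c x ≤ coordFn c y := by
  simp [coordFn, Prod.le_def, Pi.le_def, Sum.forall]

lemma isPolyhedralRelation_Icc (l u : (Fin n → ℝ) × (Fin n → ℝ)) :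
    IsPolyhedralRelation n (Icc l u) := by
  have hIci : IsPolyhedralRelation n (Ici l) := by
    convert isPolyhedralRelation_of_finite (fun c => -coordFn c) (fun c => -coordFn c l) using 1
    ext x
    simp [le_iff_forall_coordFn_le (x := l)]
  have hIic : IsPolyhedralRelation n (Iic u) := by
    convert isPolyhedralRelation_of_finite coordFn (fun c => coordFn c u) using 1
    ext x
    simp [le_iff_forall_coordFn_le (y := u)]
  exact Ici_inter_Iic (a := l) (b := u) ▸ hIci.inter hIic

lemma exists_isPolyhedralRelation_superset_inter_subset {K Z : Set ((Fin n → ℝ) × (Fin n → ℝ))}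
    (hK : Convex ℝ K) (hKc : IsClosed K) (hZ : Z.Finite) :
    ∃ R, IsPolyhedralRelation n R ∧ K ⊆ R ∧ R ∩ Z ⊆ K := by
  have hsep : ∀ z : ↥(Z \ K), ∃ (f : StrongDual ℝ _) (u : ℝ), (∀ a ∈ K, f a < u) ∧ u < f z :=
    fun z => geometric_hahn_banach_closed_point hK hKc z.2.2
  choose f u hfK hfz using hsep
  have : Finite ↥(Z \ K) := hZ.sdiff.to_subtype
  refine ⟨_, isPolyhedralRelation_of_finite (fun z => (f z : _ →ₗ[ℝ] ℝ)) u,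
    fun a ha z => (hfK z a ha).le, fun z ⟨hzR, hzZ⟩ => ?_⟩
  by_contra hzK
  exact (hfz ⟨z, hzZ, hzK⟩).not_ge (hzR ⟨z, hzZ, hzK⟩)

def intCastPair (z : (Fin n → ℤ) × (Fin n → ℤ)) : (Fin n → ℝ) × (Fin n → ℝ) :=
  (fun j => (z.1 j : ℝ), fun j => (z.2 j : ℝ))

lemma intCastPair_le_intCastPair {z w : (Fin n → ℤ) × (Fin n → ℤ)} :
    intCastPair z ≤ intCastPair w ↔ z ≤ w := by
  simp [intCastPair, Prod.le_def, Pi.le_def]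

lemma exists_isPolyhedralRelation_forall_intCastPair_mem_convexHull
    {S : Set ((Fin n → ℤ) × (Fin n → ℤ))} (hS : S.Finite) :
    ∃ R, IsPolyhedralRelation n R ∧ intCastPair '' S ⊆ R ∧
      ∀ z, intCastPair z ∈ R → intCastPair z ∈ convexHull ℝ (intCastPair '' S) := by
  classical
  obtain ⟨lo, hlo⟩ := hS.bddBelow
  obtain ⟨hi, hhi⟩ := hS.bddAbove
  obtain ⟨C, hC, hKC, hCZ⟩ := exists_isPolyhedralRelation_superset_inter_subset
    (convex_convexHull ℝ (intCastPair '' S)) ((hS.image _).isClosed_convexHull ℝ)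
    ((finite_Icc lo hi).image intCastPair)
  refine ⟨Icc (intCastPair lo) (intCastPair hi) ∩ C, (isPolyhedralRelation_Icc _ _).inter hC,
    ?_, fun z ⟨hzbox, hzC⟩ => hCZ ⟨hzC, z, ?_, rfl⟩⟩
  · rintro _ ⟨z, hz, rfl⟩
    exact ⟨⟨intCastPair_le_intCastPair.2 (hlo hz), intCastPair_le_intCastPair.2 (hhi hz)⟩,
      hKC (subset_convexHull ℝ _ (mem_image_of_mem _ hz))⟩
  · exact ⟨intCastPair_le_intCastPair.1 hzbox.1, intCastPair_le_intCastPair.1 hzbox.2⟩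

lemma HasCycleOfLength.of_forall_intCastPair_mem {R T : Set ((Fin n → ℝ) × (Fin n → ℝ))}
    (hRT : ∀ z, intCastPair z ∈ R → intCastPair z ∈ T) {m : ℕ} [NeZero m]
    (h : HasCycleOfLength n R m) : HasCycleOfLength n T m :=
  let ⟨s, hs⟩ := h
  ⟨s, fun i => hRT (s i, s (i + 1)) (hs i)⟩

end

theorem stmt_4 (n : ℕ) (M : ℕ → ℕ)
    (hpoly : ∀ R : Set ((Fin n → ℝ) × (Fin n → ℝ)), IsPolyhedralRelation n R →
      (∃ m, ∃ _ : NeZero m, HasCycleOfLength n R m) → ∃ m, m ≤ M n ∧ ∃ _ : NeZero m, HasCycleOfLength n R m)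
    (T : Set ((Fin n → ℝ) × (Fin n → ℝ))) (hT : Convex ℝ T)
    (hcyc : ∃ m, ∃ _ : NeZero m, HasCycleOfLength n T m) :
    ∃ m, m ≤ M n ∧ ∃ _ : NeZero m, HasCycleOfLength n T m := by
  obtain ⟨m, hm, s, hs⟩ := hcyc
  obtain ⟨R, hR, hsR, hRK⟩ := exists_isPolyhedralRelation_forall_intCastPair_mem_convexHull
    (finite_range fun i => (s i, s (i + 1)))
  have hKT : convexHull ℝ (intCastPair '' range fun i => (s i, s (i + 1))) ⊆ T :=
    convexHull_min (by rintro _ ⟨_, ⟨i, rfl⟩, rfl⟩; exact hs i) hT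
  obtain ⟨m', hle, hm', hR'⟩ :=
    hpoly R hR ⟨m, hm, s, fun i => hsR (mem_image_of_mem _ (mem_range_self i))⟩
  exact ⟨m', hle, hm', hR'.of_forall_intCastPair_mem fun z hz => hKT (hRK z hz)⟩
end

section
/- Let d ≥ 2 and let m, r be integers with m coprime to d and m·i ≡ r (mod d), and let T(x) = (m x − r)/d. If n is an integer such that T^k(n) ≡ i (mod d) for every k ≥ 0, then T(n) = n (the orbit is a fixed point). -/
theorem stmt_6 (d : ℕ) (hd : 2 ≤ d) (m r i : ℤ) (hm0 : m ≠ 0)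
    (hcop : IsCoprime m (d : ℤ)) (hmi : m * i ≡ r [ZMOD (d : ℤ)])
    (T : ℤ → ℤ) (n : ℤ)
    (hres : ∀ k : ℕ, T^[k] n ≡ i [ZMOD (d : ℤ)])
    (hT : ∀ k : ℕ, (d : ℤ) * T^[k + 1] n = m * T^[k] n - r) :
    n * m - n * d - r = 0 ∧ T n = n := by
  have hd' : (2 : ℤ) ≤ (d : ℤ) := by exact_mod_cast hd
  have hdne : (d : ℤ) ≠ 0 := by linarith
  have hy : ∀ k : ℕ, (d : ℤ) * ((m - d) * T^[k+1] n - r)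
      = m * ((m - d) * T^[k] n - r) := by
    intro k
    linear_combination (m - (d : ℤ)) * hT k
  have key : ∀ k : ℕ, (d : ℤ)^k * ((m - d) * T^[k] n - r)
      = m^k * ((m - d) * n - r) := by
    intro k
    induction k with
    | zero => simp
    | succ k ih =>
      have h0 := hy k
      calc (d : ℤ)^(k+1) * ((m - d) * T^[k+1] n - r)
          = (d : ℤ)^k * ((d : ℤ) * ((m - d) * T^[k+1] n - r)) := by ring
        _ = (d : ℤ)^k * (m * ((m - d) * T^[k] n - r)) := by rw [h0]
        _ = m * ((d : ℤ)^k * ((m - d) * T^[k] n - r)) := by ring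
        _ = m^(k+1) * ((m - d) * n - r) := by rw [ih]; ring
  have hdvd : ∀ k : ℕ, (d : ℤ)^k ∣ ((m - d) * n - r) := by
    intro k
    have h1 : (d : ℤ)^k ∣ m^k * ((m - d) * n - r) := ⟨_, (key k).symm⟩
    exact (IsCoprime.pow hcop.symm).dvd_of_dvd_mul_left h1
  have hy0 : (m - d) * n - r = 0 := by
    by_contra h0
    set y : ℤ := (m - d) * n - r with hy0def
    have hpos : 0 < |y| := abs_pos.mpr h0
    set k : ℕ := y.natAbs
    have hle : (d : ℤ)^k ≤ |y| := Int.le_of_dvd hpos ((dvd_abs _ _).mpr (hdvd k))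
    have h2 : (2 : ℤ)^k ≤ (d : ℤ)^k := pow_le_pow_left₀ (by norm_num) hd' k
    have h3 : (k : ℤ) < (2 : ℤ)^k := by exact_mod_cast Nat.lt_two_pow_self (n := k)
    have h4 : |y| = (k : ℤ) := Int.abs_eq_natAbs y
    linarith
  constructor
  · linarith [hy0]
  · have h1 := hT 0
    simp only [zero_add, Function.iterate_one, Function.iterate_zero, id_eq] at h1
    have : (d : ℤ) * T n = (d : ℤ) * n := by linarith [hy0]
    exact mul_left_cancel₀ hdne this
end

section
/- Let v₁, v₂, w, u ∈ ℝ² be nonzero vectors with v₁ not collinear to v₂, w ∈ C₊ := {(x₁,x₂) : x₁ ≥ 0 ≥ x₂}, u ∈ C₋ := {(x₁,x₂) : x₂ ≥ 0 ≥ x₁}, and w, u ∈ nonneg(v₁,v₂). Then nonneg(v₁,v₂) intersects the punctured diagonal Δ = {(t,t) : t ≠ 0}. -/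
theorem stmt_10 (v₁ v₂ w u : ℝ × ℝ)
    (hv₁ : v₁ ≠ 0) (hv₂ : v₂ ≠ 0) (hw : w ≠ 0) (hu : u ≠ 0)
    (hnc : ∀ rr : ℝ, v₁ ≠ rr • v₂ ∧ v₂ ≠ rr • v₁)
    (hwC : 0 ≤ w.1 ∧ w.2 ≤ 0) (huC : 0 ≤ u.2 ∧ u.1 ≤ 0)
    (hwin : ∃ α β : ℝ, 0 ≤ α ∧ 0 ≤ β ∧ w = α • v₁ + β • v₂)
    (huin : ∃ α β : ℝ, 0 ≤ α ∧ 0 ≤ β ∧ u = α • v₁ + β • v₂) :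
    ∃ t : ℝ, t ≠ 0 ∧ ∃ α β : ℝ, 0 ≤ α ∧ 0 ≤ β ∧
      ((t, t) : ℝ × ℝ) = α • v₁ + β • v₂ := by
  obtain ⟨a, b, ha, hb, hwab⟩ := hwin
  obtain ⟨c, d, hc, hd, hucd⟩ := huin
  -- linear independence of v₁, v₂
  have hind : ∀ x y : ℝ, x • v₁ + y • v₂ = 0 → x = 0 ∧ y = 0 := by
    intro x y hxy
    have hx : x = 0 := by
      by_contra hx0
      have h1 : x • v₁ = (-y) • v₂ := by
        linear_combination (norm := module) hxy
      have h2 : v₁ = (-y / x) • v₂ := by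
        have h3 := congrArg (fun z => x⁻¹ • z) h1
        simpa [smul_smul, hx0, div_eq_mul_inv, mul_comm] using h3
      exact (hnc (-y / x)).1 h2
    refine ⟨hx, ?_⟩
    rw [hx, zero_smul, zero_add] at hxy
    exact (smul_eq_zero.mp hxy).resolve_right hv₂
  set r : ℝ := u.2 - u.1 with hr
  set s : ℝ := w.1 - w.2 with hs
  have hr0 : 0 < r := by
    rcases lt_or_eq_of_le (le_trans huC.2 huC.1) with h | h
    · simpa [hr] using sub_pos.mpr h
    · exfalso
      have h1 : u.1 = 0 := by linarith [huC.1, huC.2]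
      have h2 : u.2 = 0 := by linarith [huC.1, huC.2]
      exact hu (Prod.ext h1 h2)
  have hs0 : 0 < s := by
    rcases lt_or_eq_of_le (le_trans hwC.2 hwC.1) with h | h
    · simpa [hs] using sub_pos.mpr h
    · exfalso
      have h1 : w.2 = 0 := by linarith [hwC.1, hwC.2]
      have h2 : w.1 = 0 := by linarith [hwC.1, hwC.2]
      exact hw (Prod.ext h2 h1)
  set t : ℝ := r * w.1 + s * u.1 with ht
  have hdiag : ((t, t) : ℝ × ℝ) = r • w + s • u := by
    have h2 : t = r * w.2 + s * u.2 := by simp only [ht, hr, hs]; ring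
    ext
    · simp [ht]
    · simp [h2]
  have hcomb : ((t, t) : ℝ × ℝ) = (r * a + s * c) • v₁ + (r * b + s * d) • v₂ := by
    rw [hdiag, hwab, hucd]
    module
  have ht0 : t ≠ 0 := by
    intro h0
    have hz : (r * a + s * c) • v₁ + (r * b + s * d) • v₂ = 0 := by
      rw [← hcomb, h0]; rfl
    obtain ⟨h1, h2⟩ := hind _ _ hz
    have ha0 : a = 0 := by nlinarith
    have hb0 : b = 0 := by nlinarith
    apply hw
    rw [hwab, ha0, hb0, zero_smul, zero_smul, add_zero]
  exact ⟨t, ht0, r * a + s * c, r * b + s * d,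
    by positivity, by positivity, hcomb⟩
end

section
/- Let R ⊆ ℝ² be closed and convex with recession cone rec(R) contained in {(x₁,x₂) : x₁ < 0 < x₂} ∪ {(0,0)}. Then there is no infinite sequence of distinct integers s₁, s₂, … with (s_i, s_{i+1}) ∈ R for all i. -/
open Filter Topology

lemma aux_bdd (R : Set (ℝ × ℝ)) (hcl : IsClosed R) (hconv : Convex ℝ R)
    (hrec : {v : ℝ × ℝ | ∀ x ∈ R, ∀ t : ℝ, 0 ≤ t → x + t • v ∈ R} ⊆
      {v : ℝ × ℝ | v.1 < 0 ∧ 0 < v.2} ∪ {0})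
    (f : ℝ × ℝ → ℝ) (hf : Continuous f)
    (hfs : ∀ (c : ℝ) (p : ℝ × ℝ), f (c • p) = c * f p)
    (hfrec : ∀ v : ℝ × ℝ, v.1 < 0 ∧ 0 < v.2 → f v < 0) :
    ∃ C : ℝ, ∀ p ∈ R, 0 ≤ f p → ‖p‖ ≤ C := by
  by_contra h
  push_neg at h
  choose z hzR hzf hzn using fun n : ℕ => h (n : ℝ)
  have hzpos : ∀ n : ℕ, 0 < ‖z n‖ := fun n =>
    lt_of_le_of_lt (Nat.cast_nonneg n) (hzn n)
  set u : ℕ → ℝ × ℝ := fun n => ‖z n‖⁻¹ • z n with hu_def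
  have husphere : ∀ n, u n ∈ Metric.sphere (0 : ℝ × ℝ) 1 := by
    intro n
    simp only [mem_sphere_zero_iff_norm, hu_def, norm_smul, norm_inv, norm_norm]
    exact inv_mul_cancel₀ (hzpos n).ne'
  obtain ⟨v, hvs, φ, hφ, hu⟩ :=
    (isCompact_sphere (0 : ℝ × ℝ) 1).tendsto_subseq husphere
  have hv1 : ‖v‖ = 1 := mem_sphere_zero_iff_norm.mp hvs
  have hnormtop : Tendsto (fun n => ‖z (φ n)‖) atTop atTop := by
    apply tendsto_atTop_mono (f := fun n : ℕ => (n : ℝ))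
    · intro n
      have h1 : (n : ℝ) ≤ (φ n : ℝ) := by exact_mod_cast hφ.le_apply
      exact h1.trans (hzn (φ n)).le
    · exact tendsto_natCast_atTop_atTop
  -- v is a recession direction
  have hvrec : v ∈ {w : ℝ × ℝ | ∀ x ∈ R, ∀ t : ℝ, 0 ≤ t → x + t • w ∈ R} := by
    intro p hp t ht
    set lam : ℕ → ℝ := fun n => t / ‖z (φ n)‖ with hlam_def
    have hlam0 : Tendsto lam atTop (𝓝 0) := tendsto_const_nhds.div_atTop hnormtop
    have hlamnn : ∀ n, 0 ≤ lam n := fun n => div_nonneg ht (norm_nonneg _)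
    have hlamsmul : ∀ n, lam n • z (φ n) = t • u (φ n) := by
      intro n
      simp only [hlam_def, hu_def, div_eq_mul_inv, mul_smul]
    have hev : ∀ᶠ n in atTop, lam n < 1 := hlam0.eventually_lt_const one_pos
    have hmem : ∀ᶠ n in atTop,
        (1 - lam n) • p + lam n • z (φ n) ∈ R := by
      filter_upwards [hev] with n hn1
      exact hconv hp (hzR (φ n)) (by linarith [hlamnn n]) (hlamnn n) (by ring)
    have htend : Tendsto (fun n => (1 - lam n) • p + lam n • z (φ n)) atTop
        (𝓝 (p + t • v)) := by
      have h1 : Tendsto (fun n => (1 - lam n) • p) atTop (𝓝 p) := by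
        have h0 : Tendsto (fun n => 1 - lam n) atTop (𝓝 (1 - 0)) :=
          hlam0.const_sub 1
        simpa using h0.smul_const p
      have h2 : Tendsto (fun n => lam n • z (φ n)) atTop (𝓝 (t • v)) := by
        have : Tendsto (fun n => t • u (φ n)) atTop (𝓝 (t • v)) := hu.const_smul t
        exact this.congr fun n => (hlamsmul n).symm
      exact h1.add h2
    exact hcl.mem_of_tendsto htend hmem
  -- but then f v < 0 while f v ≥ 0
  have hfv : 0 ≤ f v := by
    have htend : Tendsto (fun n => f (u (φ n))) atTop (𝓝 (f v)) :=
      (hf.tendsto v).comp hu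
    refine ge_of_tendsto' htend fun n => ?_
    simp only [hu_def, hfs]
    exact mul_nonneg (inv_nonneg.mpr (norm_nonneg _)) (hzf (φ n))
  rcases hrec hvrec with hq | h0
  · exact absurd (hfrec v hq) (not_lt.mpr hfv)
  · rw [Set.mem_singleton_iff] at h0
    rw [h0] at hv1
    simp at hv1

theorem stmt_12 (R : Set (ℝ × ℝ)) (hcl : IsClosed R) (hconv : Convex ℝ R)
    (hrec : {v : ℝ × ℝ | ∀ x ∈ R, ∀ t : ℝ, 0 ≤ t → x + t • v ∈ R} ⊆
      {v : ℝ × ℝ | v.1 < 0 ∧ 0 < v.2} ∪ {0}) :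
    ¬ ∃ s : ℕ → ℤ, Function.Injective s ∧
      ∀ i : ℕ, (((s i : ℝ)), ((s (i + 1) : ℝ))) ∈ R := by
  rintro ⟨s, hinj, hmem⟩
  obtain ⟨C1, hC1⟩ := aux_bdd R hcl hconv hrec (fun p => p.1) continuous_fst
    (fun c p => by simp [Prod.smul_def, smul_eq_mul]) (fun v hv => hv.1)
  obtain ⟨C2, hC2⟩ := aux_bdd R hcl hconv hrec (fun p => -p.2) continuous_snd.neg
    (fun c p => by simp [Prod.smul_def, smul_eq_mul])
    (fun v hv => by show -v.2 < 0; linarith [hv.2])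
  have hfin1 : {i : ℕ | 0 ≤ s i}.Finite := by
    have hsub : {i : ℕ | 0 ≤ s i} ⊆ s ⁻¹' Set.Icc (-⌈C1⌉) ⌈C1⌉ := by
      intro i hi
      have hi' : (0 : ℝ) ≤ (s i : ℝ) := by exact_mod_cast hi
      have hnorm : ‖((s i : ℝ), (s (i+1) : ℝ))‖ ≤ C1 := hC1 _ (hmem i) hi'
      have h1 : |(s i : ℝ)| ≤ C1 := by
        have := norm_fst_le ((s i : ℝ), (s (i+1) : ℝ))
        simp only [Real.norm_eq_abs] at this
        exact this.trans hnorm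
      rw [abs_le] at h1
      constructor
      · have : (-⌈C1⌉ : ℝ) ≤ (s i : ℝ) := by
          linarith [Int.le_ceil C1]
        exact_mod_cast this
      · have : (s i : ℝ) ≤ (⌈C1⌉ : ℝ) := h1.2.trans (Int.le_ceil C1)
        exact_mod_cast this
    exact ((Set.finite_Icc _ _).preimage hinj.injOn).subset hsub
  have hfin2 : {i : ℕ | s (i + 1) ≤ 0}.Finite := by
    have hsub : {i : ℕ | s (i + 1) ≤ 0} ⊆
        (fun i => s (i + 1)) ⁻¹' Set.Icc (-⌈C2⌉) ⌈C2⌉ := by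
      intro i hi
      have hi' : (0 : ℝ) ≤ -(s (i+1) : ℝ) := by
        have : (s (i+1) : ℝ) ≤ 0 := by exact_mod_cast hi
        linarith
      have hnorm : ‖((s i : ℝ), (s (i+1) : ℝ))‖ ≤ C2 := hC2 _ (hmem i) hi'
      have h1 : |(s (i+1) : ℝ)| ≤ C2 := by
        have := norm_snd_le ((s i : ℝ), (s (i+1) : ℝ))
        simp only [Real.norm_eq_abs] at this
        exact this.trans hnorm
      rw [abs_le] at h1
      constructor
      · have : (-⌈C2⌉ : ℝ) ≤ (s (i+1) : ℝ) := by
          linarith [Int.le_ceil C2]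
        exact_mod_cast this
      · have : (s (i+1) : ℝ) ≤ (⌈C2⌉ : ℝ) := h1.2.trans (Int.le_ceil C2)
        exact_mod_cast this
    have hinj2 : Function.Injective (fun i : ℕ => s (i + 1)) :=
      hinj.comp fun a b h => by omega
    exact ((Set.finite_Icc _ _).preimage hinj2.injOn).subset hsub
  obtain ⟨N, hN⟩ := (hfin1.union hfin2).bddAbove
  have hnot : ∀ i, N < i → ¬ 0 ≤ s i ∧ ¬ s (i + 1) ≤ 0 := by
    intro i hNi
    constructor
    · intro hc
      exact absurd (hN (Set.mem_union_left _ hc)) (not_le.mpr hNi)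
    · intro hc
      exact absurd (hN (Set.mem_union_right _ hc)) (not_le.mpr hNi)
  have h1 := (hnot (N + 2) (by omega)).1
  have h2 := (hnot (N + 1) (by omega)).2
  have h3 : N + 1 + 1 = N + 2 := by omega
  rw [h3] at h2
  omega
end

section
/- Let R ⊆ ℝ² be an SLC whose set of integer transitions satisfies R_ℤ = {(x,y) ∈ ℤ² : a ≤ x + y ≤ b} for integers a ≤ b. If b − a ≥ 1, then R admits a self-avoiding trace: there is an infinite sequence of pairwise distinct integers s₁, s₂, … with a ≤ s_i + s_{i+1} ≤ b for all i. -/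
theorem stmt_13 (R : Set (ℝ × ℝ)) (a b : ℤ) (hab : a ≤ b)
    (hR : ∀ x y : ℤ, ((x : ℝ), (y : ℝ)) ∈ R ↔ (a ≤ x + y ∧ x + y ≤ b))
    (h1 : 1 ≤ b - a) :
    ∃ s : ℕ → ℤ, Function.Injective s ∧
      ∀ i : ℕ, (((s i : ℝ)), ((s (i + 1) : ℝ))) ∈ R := by
  set c : ℤ := 2 * |a| + 1 with hc
  set d : ℤ := b - a with hd
  refine ⟨fun n => if Even n then c + (n / 2 : ℕ) * d else a - c - (n / 2 : ℕ) * d, ?_, ?_⟩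
  · intro m n h
    simp only at h
    have ha : a ≤ |a| := le_abs_self a
    have ha0 : (0:ℤ) ≤ |a| := abs_nonneg a
    rcases Nat.even_or_odd m with hm | hm <;> rcases Nat.even_or_odd n with hn | hn
    · rw [if_pos hm, if_pos hn] at h
      have h2 : (m / 2 : ℕ) = (n / 2 : ℕ) := by
        have := add_left_cancel h
        exact_mod_cast mul_right_cancel₀ (by omega) this
      have hm' := Nat.even_iff.mp hm
      have hn' := Nat.even_iff.mp hn
      omega
    · rw [if_pos hm, if_neg (Nat.not_even_iff_odd.mpr hn)] at h
      have h2 : (0:ℤ) ≤ (m / 2 : ℕ) * d := by positivity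
      have h3 : (0:ℤ) ≤ (n / 2 : ℕ) * d := by positivity
      omega
    · rw [if_neg (Nat.not_even_iff_odd.mpr hm), if_pos hn] at h
      have h2 : (0:ℤ) ≤ (m / 2 : ℕ) * d := by positivity
      have h3 : (0:ℤ) ≤ (n / 2 : ℕ) * d := by positivity
      omega
    · rw [if_neg (Nat.not_even_iff_odd.mpr hm), if_neg (Nat.not_even_iff_odd.mpr hn)] at h
      have h2 : (m / 2 : ℕ) = (n / 2 : ℕ) := by
        have h3 : ((m / 2 : ℕ) : ℤ) * d = ((n / 2 : ℕ) : ℤ) * d := by omega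
        exact_mod_cast mul_right_cancel₀ (by omega) h3
      have hm' := Nat.odd_iff.mp hm
      have hn' := Nat.odd_iff.mp hn
      omega
  · intro i
    rw [hR]
    rcases Nat.even_or_odd i with hi | hi
    · have hie := Nat.even_iff.mp hi
      have hi' : ¬ Even (i + 1) := by simp [Nat.even_add_one, hi]
      simp only [if_pos hi, if_neg hi']
      have h2 : ((i + 1) / 2 : ℕ) = (i / 2 : ℕ) := by omega
      rw [h2]
      constructor <;> omega
    · have hio := Nat.odd_iff.mp hi
      have hi2 : ¬ Even i := Nat.not_even_iff_odd.mpr hi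
      have hi' : Even (i + 1) := by simp [Nat.even_add_one, hi2]
      simp only [if_neg hi2, if_pos hi']
      have h2 : ((i + 1) / 2 : ℕ) = (i / 2 : ℕ) + 1 := by omega
      rw [h2]
      push_cast
      constructor <;> nlinarith [Int.natCast_nonneg (i / 2)]
end
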